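/- arXiv:1001.3868 — 2 statements merged into one kernel-verified Lean document; each statement's English description precedes it below -/
import Mathlib

section
/- Let $\kkk$ be an algebraically closed field and $f \in \kkk[t]$ a monic polynomial of degree $n$. If $f = t^n - a_1 t^{n-1} + \dots + (-1)^n a_n$, then the coordinate ring of the scheme $\Flag_f$ is $\kkk[t_1,\dots,t_n]/(e_1 - a_1, \dots, e_n - a_n)$ where $e_i$ is the $i$-th elementary symmetric polynomial in $t_1,\dots,t_n$, and this ring is a free $\kkk$-module of rank $n!$. -/
open Polynomial MvPolynomial

/-!
Over any commutative ring `R`, the quotient of `R[t₁,…,tₙ]` by the coefficients of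
`∏ (X - tᵢ) - f` is the universal algebra in which `f` splits into linear factors; for monic `f`
these relations are exactly `eᵢ = aᵢ`. Adjoining a first root `x = t₁` gives `A = R[X]/(f)`,
free over `R` of rank `n`, and over `A` the remaining relations say that `t₂,…,tₙ` split
`f / (X - x)`, which is monic of degree `n - 1`. So the algebra for `f` over `R` is the algebra
for `f / (X - x)` over `A`, and induction gives a free module of rank `n · (n - 1)! = n!`.
-/

section

variable {R : Type*} [CommRing R]

theorem MvPolynomial.prod_X_sub_C_coeff (σ : Type*) [Fintype σ] {k : ℕ}
    (hk : k ≤ Fintype.card σ) :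
    (∏ i : σ, (Polynomial.X - Polynomial.C (MvPolynomial.X i : MvPolynomial σ R))).coeff k =
      (-1) ^ (Fintype.card σ - k) * esymm σ R (Fintype.card σ - k) := by
  let s := Finset.univ.val.map fun i => (MvPolynomial.X i : MvPolynomial σ R)
  have hs : Fintype.card σ = Multiset.card s := by simp [s, Finset.card_univ]
  rw [hs] at hk ⊢
  rw [esymm_eq_multiset_esymm σ R, Finset.prod_eq_multiset_prod,
    ← Multiset.prod_X_sub_C_coeff s hk, Multiset.map_map]
  rfl

namespace AdjoinRoot

noncomputable def divXSubRoot (f : R[X]) : (AdjoinRoot f)[X] :=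
  f.map (of f) /ₘ (Polynomial.X - Polynomial.C (root f))

variable {f : R[X]}

theorem X_sub_C_root_mul_divXSubRoot :
    (Polynomial.X - Polynomial.C (root f)) * divXSubRoot f = f.map (of f) :=
  mul_divByMonic_eq_iff_isRoot.mpr (isRoot_root f)

theorem monic_divXSubRoot (hf : f.Monic) : (divXSubRoot f).Monic :=
  (monic_X_sub_C _).of_mul_monic_left (by rw [X_sub_C_root_mul_divXSubRoot]; exact hf.map _)

theorem nontrivial_of_monic [Nontrivial R] (hf : f.Monic) (hdeg : f.natDegree ≠ 0) :
    Nontrivial (AdjoinRoot f) :=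
  Ideal.Quotient.nontrivial_iff.mpr <| by
    rw [Ne, Ideal.span_singleton_eq_top, hf.isUnit_iff]
    rintro rfl
    exact hdeg natDegree_one

theorem natDegree_divXSubRoot [Nontrivial R] {n : ℕ} (hf : f.Monic)
    (hdeg : f.natDegree = n + 1) : (divXSubRoot f).natDegree = n := by
  have := nontrivial_of_monic hf (by omega)
  rw [divXSubRoot, natDegree_divByMonic _ (monic_X_sub_C _), hf.natDegree_map, natDegree_X_sub_C,
    hdeg, Nat.add_sub_cancel]

end AdjoinRoot

variable (n : ℕ) (f : R[X])

noncomputable def splittingRelation : (MvPolynomial (Fin n) R)[X] :=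
  (∏ i : Fin n, (Polynomial.X - Polynomial.C (MvPolynomial.X i))) - f.map MvPolynomial.C

noncomputable def splittingIdeal : Ideal (MvPolynomial (Fin n) R) :=
  Ideal.span (Set.range (splittingRelation n f).coeff)

abbrev SplittingAlgebra := MvPolynomial (Fin n) R ⧸ splittingIdeal n f

variable {n f}

theorem coeff_splittingRelation_sub_one_sub (i : Fin n) :
    (splittingRelation n f).coeff (n - (i.1 + 1)) =
      (-1) ^ (i.1 + 1) * MvPolynomial.esymm (Fin n) R (i.1 + 1) -
        MvPolynomial.C (f.coeff (n - (i.1 + 1))) := by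
  rw [splittingRelation, Polynomial.coeff_sub, MvPolynomial.prod_X_sub_C_coeff _ (by simp),
    Fintype.card_fin, Nat.sub_sub_self (by omega : i.1 + 1 ≤ n), Polynomial.coeff_map]

theorem coeff_splittingRelation_eq_zero (hf : f.Monic) (hdeg : f.natDegree = n) {k : ℕ}
    (hk : n ≤ k) : (splittingRelation n f).coeff k = 0 := by
  rw [splittingRelation, Polynomial.coeff_sub, Polynomial.coeff_map, sub_eq_zero]
  obtain rfl | hk := hk.eq_or_lt
  · rw [MvPolynomial.prod_X_sub_C_coeff _ (by simp), Fintype.card_fin, Nat.sub_self, ← hdeg,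
      hf.coeff_natDegree]
    simp
  · have hP : (∏ i : Fin n, (Polynomial.X - Polynomial.C
        (MvPolynomial.X i : MvPolynomial (Fin n) R))).natDegree ≤ n := by
      nontriviality MvPolynomial (Fin n) R
      simp
    rw [Polynomial.coeff_eq_zero_of_natDegree_lt (hP.trans_lt hk),
      Polynomial.coeff_eq_zero_of_natDegree_lt (by omega), map_zero]

theorem splittingIdeal_eq_span_esymm_sub_C (a : Fin n → R) (hf : f.Monic)
    (hdeg : f.natDegree = n)
    (hcoeff : ∀ i : Fin n, f.coeff (n - (i.1 + 1)) = (-1) ^ (i.1 + 1) * a i) :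
    splittingIdeal n f = Ideal.span (Set.range fun i : Fin n =>
      MvPolynomial.esymm (Fin n) R (i.1 + 1) - MvPolynomial.C (a i)) := by
  have hlow (i : Fin n) : (splittingRelation n f).coeff (n - (i.1 + 1)) =
      (-1) ^ (i.1 + 1) * (MvPolynomial.esymm (Fin n) R (i.1 + 1) - MvPolynomial.C (a i)) := by
    rw [coeff_splittingRelation_sub_one_sub, hcoeff, map_mul, map_pow, map_neg, map_one]
    ring
  apply le_antisymm
  · rw [splittingIdeal, Ideal.span_le]
    rintro _ ⟨k, rfl⟩
    rcases lt_or_ge k n with hk | hk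
    · obtain ⟨i, rfl⟩ : ∃ i : Fin n, n - (i.1 + 1) = k :=
        ⟨⟨n - k - 1, by omega⟩, by simp; omega⟩
      rw [hlow]
      exact Ideal.mul_mem_left _ _ (Ideal.subset_span ⟨i, rfl⟩)
    · rw [coeff_splittingRelation_eq_zero hf hdeg hk]
      exact zero_mem _
  · rw [Ideal.span_le]
    rintro _ ⟨i, rfl⟩
    have hgen : MvPolynomial.esymm (Fin n) R (i.1 + 1) - MvPolynomial.C (a i) =
        (-1) ^ (i.1 + 1) * (splittingRelation n f).coeff (n - (i.1 + 1)) := by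
      rw [hlow, ← mul_assoc, ← mul_pow]
      simp
    dsimp only
    rw [hgen]
    exact Ideal.mul_mem_left _ _ (Ideal.subset_span ⟨_, rfl⟩)

theorem splittingIdeal_le_ker_iff {S : Type*} [CommRing S] (φ : MvPolynomial (Fin n) R →+* S) :
    splittingIdeal n f ≤ RingHom.ker φ ↔
      ∏ i, (Polynomial.X - Polynomial.C (φ (MvPolynomial.X i))) =
        f.map (φ.comp MvPolynomial.C) := by
  have hmap : (splittingRelation n f).map φ =
      ∏ i, (Polynomial.X - Polynomial.C (φ (MvPolynomial.X i))) -
        f.map (φ.comp MvPolynomial.C) := by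
    simp [splittingRelation, Polynomial.map_prod, Polynomial.map_map]
  rw [splittingIdeal, Ideal.span_le, Set.range_subset_iff, ← sub_eq_zero, ← hmap,
    Polynomial.ext_iff]
  simp [RingHom.mem_ker]

namespace SplittingAlgebra

variable (f) in
noncomputable def root (i : Fin n) : SplittingAlgebra n f :=
  Ideal.Quotient.mk _ (MvPolynomial.X i)

theorem prod_X_sub_C_root :
    ∏ i, (Polynomial.X - Polynomial.C (root f i)) =
      f.map (algebraMap R (SplittingAlgebra n f)) :=
  (splittingIdeal_le_ker_iff (Ideal.Quotient.mk _)).mp Ideal.mk_ker.ge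

section Lift

variable {S : Type*} [CommRing S]

noncomputable def lift (φ : R →+* S) (s : Fin n → S)
    (hs : ∏ i, (Polynomial.X - Polynomial.C (s i)) = f.map φ) : SplittingAlgebra n f →+* S :=
  Ideal.Quotient.lift _ (eval₂Hom φ s) fun _ hp =>
    (splittingIdeal_le_ker_iff (eval₂Hom φ s)).mpr (by simpa using hs) hp

variable {φ : R →+* S} {s : Fin n → S}
  (hs : ∏ i, (Polynomial.X - Polynomial.C (s i)) = f.map φ)

@[simp]
theorem lift_root (i : Fin n) : lift φ s hs (root f i) = s i :=
  eval₂_X _ _ _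

@[simp]
theorem lift_algebraMap (a : R) : lift φ s hs (algebraMap R _ a) = φ a :=
  eval₂_C _ _ _

theorem ringHom_ext {g₁ g₂ : SplittingAlgebra n f →+* S}
    (hC : g₁.comp (algebraMap R _) = g₂.comp (algebraMap R _))
    (hX : ∀ i, g₁ (root f i) = g₂ (root f i)) : g₁ = g₂ :=
  Ideal.Quotient.ringHom_ext (MvPolynomial.ringHom_ext' hC hX)

end Lift

variable (R) in
noncomputable def equivOne : SplittingAlgebra 0 (1 : R[X]) ≃ₐ[R] R :=
  AlgEquiv.ofRingEquiv (f := RingEquiv.ofRingHom (lift (RingHom.id R) Fin.elim0 (by simp))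
    (algebraMap R _)
    (by ext; simp)
    (ringHom_ext (by ext; simp) fun i => i.elim0))
    (fun _ => by simp)

variable (f)

theorem eval₂_root_zero :
    f.eval₂ (algebraMap R (SplittingAlgebra (n + 1) f)) (root f 0) = 0 := by
  rw [Polynomial.eval₂_eq_eval_map, ← prod_X_sub_C_root, Polynomial.eval_prod]
  exact Finset.prod_eq_zero (Finset.mem_univ 0) (by simp)

noncomputable def ofAdjoinRoot : AdjoinRoot f →+* SplittingAlgebra (n + 1) f :=
  AdjoinRoot.lift _ _ (eval₂_root_zero f)

@[simp]
theorem ofAdjoinRoot_root : ofAdjoinRoot (n := n) f (AdjoinRoot.root f) = root f 0 :=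
  AdjoinRoot.lift_root _

@[simp]
theorem ofAdjoinRoot_of (a : R) :
    ofAdjoinRoot (n := n) f (AdjoinRoot.of f a) = algebraMap R (SplittingAlgebra (n + 1) f) a :=
  AdjoinRoot.lift_of _

theorem ofAdjoinRoot_comp_of :
    (ofAdjoinRoot (n := n) f).comp (AdjoinRoot.of f) = algebraMap R (SplittingAlgebra (n + 1) f) :=
  AdjoinRoot.lift_comp_of _

noncomputable def toSplittingAlgebraDivXSubRoot :
    SplittingAlgebra (n + 1) f →+* SplittingAlgebra n (AdjoinRoot.divXSubRoot f) :=
  lift (algebraMap R _) (Fin.cons (algebraMap (AdjoinRoot f) _ (AdjoinRoot.root f)) (root _)) (by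
    rw [Fin.prod_univ_succ, Fin.cons_zero]
    simp only [Fin.cons_succ]
    rw [prod_X_sub_C_root, IsScalarTower.algebraMap_eq R (AdjoinRoot f), ← Polynomial.map_map,
      AdjoinRoot.algebraMap_eq, ← AdjoinRoot.X_sub_C_root_mul_divXSubRoot, Polynomial.map_mul]
    simp)

noncomputable def ofSplittingAlgebraDivXSubRoot :
    SplittingAlgebra n (AdjoinRoot.divXSubRoot f) →+* SplittingAlgebra (n + 1) f :=
  lift (ofAdjoinRoot f) (fun i => root f i.succ) <|
    (monic_X_sub_C (root f 0)).isRegular.left <| by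
      dsimp only
      rw [← Fin.prod_univ_succ (fun i => Polynomial.X - Polynomial.C (root f i)),
        prod_X_sub_C_root, ← ofAdjoinRoot_comp_of, ← Polynomial.map_map,
        ← AdjoinRoot.X_sub_C_root_mul_divXSubRoot, Polynomial.map_mul]
      simp

noncomputable def equivDivXSubRoot :
    SplittingAlgebra (n + 1) f ≃ₐ[R] SplittingAlgebra n (AdjoinRoot.divXSubRoot f) :=
  AlgEquiv.ofRingEquiv (f := RingEquiv.ofRingHom (toSplittingAlgebraDivXSubRoot f)
    (ofSplittingAlgebraDivXSubRoot f)
    (by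
      refine ringHom_ext (AdjoinRoot.ringHom_ext ?_ ?_) fun i => ?_
      · ext a
        simp [toSplittingAlgebraDivXSubRoot, ofSplittingAlgebraDivXSubRoot,
          IsScalarTower.algebraMap_apply R (AdjoinRoot f)]
      all_goals simp [toSplittingAlgebraDivXSubRoot, ofSplittingAlgebraDivXSubRoot])
    (by
      refine ringHom_ext ?_ fun i => ?_
      · ext a
        simp [toSplittingAlgebraDivXSubRoot, ofSplittingAlgebraDivXSubRoot,
          IsScalarTower.algebraMap_apply R (AdjoinRoot f)]
      · cases i using Fin.cases <;>
          simp [toSplittingAlgebraDivXSubRoot, ofSplittingAlgebraDivXSubRoot]))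
    (fun _ => by simp [toSplittingAlgebraDivXSubRoot])

theorem free_and_rank_eq_factorial [Nontrivial R] (hf : f.Monic) (hdeg : f.natDegree = n) :
    Module.Free R (SplittingAlgebra n f) ∧
      Module.rank R (SplittingAlgebra n f) = n.factorial := by
  induction n generalizing R with
  | zero =>
    obtain rfl := eq_one_of_monic_natDegree_zero hf hdeg
    let e := (equivOne R).toLinearEquiv
    exact ⟨.of_equiv e.symm, by rw [e.rank_eq, Module.rank_self]; simp⟩
  | succ n ih =>
    have := AdjoinRoot.nontrivial_of_monic hf (by omega)
    have := hf.free_adjoinRoot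
    obtain ⟨_, hrank⟩ := ih _ (AdjoinRoot.monic_divXSubRoot hf)
      (AdjoinRoot.natDegree_divXSubRoot hf hdeg)
    have : Module.Free R (SplittingAlgebra n (AdjoinRoot.divXSubRoot f)) :=
      .trans (S := AdjoinRoot f)
    let e := (equivDivXSubRoot (n := n) f).toLinearEquiv
    refine ⟨.of_equiv e.symm, ?_⟩
    rw [e.rank_eq, ← rank_mul_rank R (AdjoinRoot f), hrank,
      rank_eq_card_basis (AdjoinRoot.powerBasis' hf).basis]
    simp [hdeg, Nat.factorial_succ]

end SplittingAlgebra

end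

theorem flag_coordinate_ring_free_of_rank_factorial_general
    {k : Type*} [Field k] {n : ℕ} (a : Fin n → k)
    (f : k[X]) (hf : f.Monic) (hdeg : f.natDegree = n)
    (hcoeff : ∀ i : Fin n, f.coeff (n - (i.1 + 1)) = (-1) ^ (i.1 + 1) * a i)
    (I : Ideal (MvPolynomial (Fin n) k))
    (hI : I = Ideal.span
      (Set.range fun i : Fin n =>
        MvPolynomial.esymm (Fin n) k (i.1 + 1) - MvPolynomial.C (a i))) :
    Module.Free k (MvPolynomial (Fin n) k ⧸ I) ∧
      Module.rank k (MvPolynomial (Fin n) k ⧸ I) = Nat.factorial n := by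
  rw [hI, ← splittingIdeal_eq_span_esymm_sub_C a hf hdeg hcoeff]
  exact SplittingAlgebra.free_and_rank_eq_factorial f hf hdeg

/-- For `f = tⁿ - a₁tⁿ⁻¹ + ⋯ + (-1)ⁿaₙ` monic of degree `n` over an
algebraically closed field `k`, the coordinate ring of `Flag_f`, namely
`k[t₁,…,tₙ]/(e₁ - a₁, …, eₙ - aₙ)`, is a free `k`-module of rank `n!`. -/
theorem flag_coordinate_ring_free_of_rank_factorial
    {k : Type*} [Field k] [IsAlgClosed k] {n : ℕ} (a : Fin n → k)
    (f : k[X]) (hf : f.Monic) (hdeg : f.natDegree = n)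
    (hcoeff : ∀ i : Fin n, f.coeff (n - (i.1 + 1)) = (-1) ^ (i.1 + 1) * a i)
    (I : Ideal (MvPolynomial (Fin n) k))
    (hI : I = Ideal.span
      (Set.range fun i : Fin n =>
        MvPolynomial.esymm (Fin n) k (i.1 + 1) - MvPolynomial.C (a i))) :
    Module.Free k (MvPolynomial (Fin n) k ⧸ I) ∧
      Module.rank k (MvPolynomial (Fin n) k ⧸ I) = Nat.factorial n :=
  flag_coordinate_ring_free_of_rank_factorial_general a f hf hdeg hcoeff I hI
end

section
/- Let $\kkk$ be an algebraically closed field, $f = t^n - a_1 t^{n-1} + \dots + (-1)^n a_n \in \kkk[t]$ monic of degree $n$. In the ring $B = \kkk[t_1,\dots,t_n]/(f(t_1),\dots,f(t_n))$, the ideal generated by the elements $(b - t_1)\cdots(b - t_n) - f(b)$ for all $b \in \kkk$ with $f(b) \ne 0$ equals the ideal generated by $e_i(t_1,\dots,t_n) - a_i$ for $1 \le i \le n$, where $e_i$ is the $i$-th elementary symmetric polynomial. -/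
open Polynomial MvPolynomial
open scoped Matrix

/-!
Both ideals are images of ideals of `k[t₁,…,tₙ]`, so it suffices to compare those.
By Vieta, `(b - t₁)⋯(b - tₙ) - f(b)` is the value at `b` of the polynomial
`Q(T) = ∏ᵢ (T - tᵢ) - f(T)`, whose coefficients are, up to sign, the `eᵢ - aᵢ`.
Evaluation at `n` distinct points is an invertible (Vandermonde) `k`-linear map on
coefficient vectors, so the values of `Q` at infinitely many points generate the same
ideal as its coefficients; and `f` has only finitely many roots in the infinite field `k`.
-/

theorem MvPolynomial.prod_X_sub_C_X_coeff {R σ : Type*} [CommRing R] [Fintype σ] {j : ℕ}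
    (hj : j ≤ Fintype.card σ) :
    (∏ i : σ, (Polynomial.X - Polynomial.C (MvPolynomial.X i : MvPolynomial σ R))).coeff j =
      (-1) ^ (Fintype.card σ - j) * esymm σ R (Fintype.card σ - j) := by
  set s := Finset.univ.val.map fun i : σ => (MvPolynomial.X i : MvPolynomial σ R)
  have hcard : Fintype.card σ = Multiset.card s := by simp [s]
  rw [hcard] at hj ⊢
  rw [esymm_eq_multiset_esymm, Finset.prod_eq_multiset_prod,
    ← Multiset.prod_X_sub_C_coeff s hj]
  simp [s, Multiset.map_map]

namespace Polynomial

variable {k A : Type*} [Field k] [CommRing A] [Algebra k A]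

theorem coeff_mem_span_eval_image (Q : A[X]) {S : Set k} (hS : S.Infinite) (j : ℕ) :
    Q.coeff j ∈ Ideal.span ((fun b => Q.eval (algebraMap k A b)) '' S) := by
  set N := Q.natDegree + 1
  obtain hj | hj := le_or_gt N j
  · rw [coeff_eq_zero_of_natDegree_lt (by omega)]
    exact zero_mem _
  let b : Fin N → k := fun m => hS.natEmbedding _ m
  have hb : Function.Injective b := fun m m' h =>
    Fin.val_injective ((hS.natEmbedding _).injective (Subtype.coe_injective h))
  let V := (algebraMap k A).mapMatrix (Matrix.vandermonde b)
  have hV : IsUnit V.det := by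
    rw [← RingHom.map_det]
    exact (Matrix.det_vandermonde_ne_zero_iff.mpr hb).isUnit.map _
  let c : Fin N → A := fun i => Q.coeff i
  have hVc : V *ᵥ c = fun m => Q.eval (algebraMap k A (b m)) := by
    ext m
    rw [eval_eq_sum_range' (Nat.lt_succ_self _), ← Fin.sum_univ_eq_sum_range]
    simp [Matrix.mulVec, dotProduct, V, c, mul_comm]
    rfl
  have hc : c = V⁻¹ *ᵥ (V *ᵥ c) := by
    rw [Matrix.mulVec_mulVec, Matrix.nonsing_inv_mul _ hV, Matrix.one_mulVec]
  change c ⟨j, hj⟩ ∈ _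
  rw [hc, hVc]
  simp only [Matrix.mulVec, dotProduct]
  refine Ideal.sum_mem _ fun m _ => ?_
  exact Ideal.mul_mem_left _ _ (Ideal.subset_span ⟨b m, (hS.natEmbedding _ m).2, rfl⟩)

theorem span_eval_image_eq_span_range_coeff (Q : A[X]) {S : Set k} (hS : S.Infinite) :
    Ideal.span ((fun b => Q.eval (algebraMap k A b)) '' S) = Ideal.span (Set.range Q.coeff) := by
  refine le_antisymm (Ideal.span_le.mpr ?_) (Ideal.span_le.mpr ?_)
  · rintro _ ⟨b, -, rfl⟩
    simp only [eval_eq_sum, Polynomial.sum]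
    exact Ideal.sum_mem _ fun j _ => Ideal.mul_mem_right _ _ (Ideal.subset_span ⟨j, rfl⟩)
  · rintro _ ⟨j, rfl⟩
    exact coeff_mem_span_eval_image Q hS j

end Polynomial

section NormRelation

variable {k : Type*} [Field k]

noncomputable def normRelationPoly (σ : Type*) [Fintype σ] (f : k[X]) :
    (MvPolynomial σ k)[X] :=
  ∏ i : σ, (Polynomial.X - Polynomial.C (MvPolynomial.X i)) - f.map MvPolynomial.C

variable {σ : Type*} [Fintype σ]

theorem eval_C_normRelationPoly (f : k[X]) (b : k) :
    (normRelationPoly σ f).eval (MvPolynomial.C b) =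
      (∏ i : σ, (MvPolynomial.C b - MvPolynomial.X i)) - MvPolynomial.C (f.eval b) := by
  simp [normRelationPoly, Polynomial.eval_prod, Polynomial.eval_map, eval₂_at_apply]

theorem coeff_normRelationPoly (f : k[X]) {j : ℕ} (hj : j ≤ Fintype.card σ) :
    (normRelationPoly σ f).coeff j =
      (-1) ^ (Fintype.card σ - j) * esymm σ k (Fintype.card σ - j) -
        MvPolynomial.C (f.coeff j) := by
  rw [normRelationPoly, Polynomial.coeff_sub, prod_X_sub_C_X_coeff hj, Polynomial.coeff_map]

theorem coeff_normRelationPoly_of_le {f : k[X]} (hf : f.Monic)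
    (hdeg : f.natDegree = Fintype.card σ) {j : ℕ} (hj : Fintype.card σ ≤ j) :
    (normRelationPoly σ f).coeff j = 0 := by
  obtain rfl | hlt := hj.eq_or_lt
  · rw [coeff_normRelationPoly f le_rfl, Nat.sub_self, pow_zero, one_mul, esymm_zero, ← hdeg,
      hf.coeff_natDegree, map_one, sub_self]
  · rw [normRelationPoly, Polynomial.coeff_sub, Polynomial.coeff_map,
      coeff_eq_zero_of_natDegree_lt (p := f) (hdeg ▸ hlt), coeff_eq_zero_of_natDegree_lt,
      map_zero, sub_zero]
    simpa using hlt

theorem span_range_coeff_normRelationPoly {n : ℕ} (a : Fin n → k) {f : k[X]} (hf : f.Monic)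
    (hdeg : f.natDegree = n)
    (hcoeff : ∀ i : Fin n, f.coeff (n - (i.1 + 1)) = (-1) ^ (i.1 + 1) * a i) :
    Ideal.span (Set.range (normRelationPoly (Fin n) f).coeff) =
      Ideal.span (Set.range fun i : Fin n =>
        esymm (Fin n) k (i.1 + 1) - MvPolynomial.C (a i)) := by
  have hdeg' : f.natDegree = Fintype.card (Fin n) := by rw [hdeg, Fintype.card_fin]
  have hsign : ∀ i : Fin n, (normRelationPoly (Fin n) f).coeff (n - (i.1 + 1)) =
      (-1) ^ (i.1 + 1) * (esymm (Fin n) k (i.1 + 1) - MvPolynomial.C (a i)) := by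
    intro i
    have hi : n - (n - (i.1 + 1)) = i.1 + 1 := by omega
    rw [coeff_normRelationPoly f (by simp), Fintype.card_fin, hi, hcoeff]
    simp only [map_mul, map_pow, map_neg, map_one]
    ring
  refine le_antisymm (Ideal.span_le.mpr ?_) (Ideal.span_le.mpr ?_)
  · rintro _ ⟨j, rfl⟩
    obtain hj | hj := lt_or_ge j n
    · have hj' : j = n - ((n - (j + 1) : ℕ) + 1) := by omega
      rw [hj', hsign ⟨n - (j + 1), by omega⟩]
      exact Ideal.mul_mem_left _ _ (Ideal.subset_span ⟨_, rfl⟩)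
    · rw [coeff_normRelationPoly_of_le hf hdeg' (by simpa using hj)]
      exact zero_mem _
  · rintro _ ⟨i, rfl⟩
    have hd : esymm (Fin n) k (i.1 + 1) - MvPolynomial.C (a i) =
        (-1) ^ (i.1 + 1) * (normRelationPoly (Fin n) f).coeff (n - (i.1 + 1)) := by
      rw [hsign, ← mul_assoc, ← mul_pow, neg_one_mul, neg_neg, one_pow, one_mul]
    simp only [SetLike.mem_coe]
    rw [hd]
    exact Ideal.mul_mem_left _ _ (Ideal.subset_span ⟨_, rfl⟩)

end NormRelation

theorem ideal_of_norm_relations_eq_ideal_of_esymm_general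
    {k : Type} [Field k] [IsAlgClosed k] {n : ℕ} (a : Fin n → k)
    (f : k[X]) (hf : f.Monic) (hdeg : f.natDegree = n)
    (hcoeff : ∀ i : Fin n, f.coeff (n - (i.1 + 1)) = (-1) ^ (i.1 + 1) * a i)
    (J : Ideal (MvPolynomial (Fin n) k)) :
    Ideal.span
        ((fun g => Ideal.Quotient.mk J g) ''
          {g | ∃ b : k, f.eval b ≠ 0 ∧
            g = (∏ i : Fin n, (MvPolynomial.C b - MvPolynomial.X i)) -
              MvPolynomial.C (f.eval b)}) =
      Ideal.span
        ((fun g => Ideal.Quotient.mk J g) ''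
          (Set.range fun i : Fin n =>
            MvPolynomial.esymm (Fin n) k (i.1 + 1) - MvPolynomial.C (a i))) := by
  have hnonroots : {b : k | f.eval b ≠ 0}.Infinite :=
    (finite_setOfPred_isRoot hf.ne_zero).infinite_compl
  have hnorm : {g | ∃ b : k, f.eval b ≠ 0 ∧
      g = (∏ i : Fin n, (MvPolynomial.C b - MvPolynomial.X i)) - MvPolynomial.C (f.eval b)} =
      (fun b => (normRelationPoly (Fin n) f).eval (algebraMap k _ b)) '' {b | f.eval b ≠ 0} := by
    ext g
    simp only [Set.mem_ofPred_eq, Set.mem_image, MvPolynomial.algebraMap_eq,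
      eval_C_normRelationPoly, eq_comm]
  rw [← Ideal.map_span, ← Ideal.map_span, hnorm, span_eval_image_eq_span_range_coeff _ hnonroots,
    span_range_coeff_normRelationPoly a hf hdeg hcoeff]

/-- Let `k` be algebraically closed and
`f = tⁿ - a₁tⁿ⁻¹ + ⋯ + (-1)ⁿaₙ` monic of degree `n`.  In
`B = k[t₁,…,tₙ]/(f(t₁),…,f(tₙ))`, the ideal generated by the elements
`(b - t₁)⋯(b - tₙ) - f(b)` for all `b` with `f(b) ≠ 0` equals the ideal
generated by the `eᵢ - aᵢ`, where `eᵢ` is the `i`-th elementary symmetric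
polynomial. -/
theorem ideal_of_norm_relations_eq_ideal_of_esymm
    {k : Type} [Field k] [IsAlgClosed k] {n : ℕ} (a : Fin n → k)
    (f : k[X]) (hf : f.Monic) (hdeg : f.natDegree = n)
    (hcoeff : ∀ i : Fin n, f.coeff (n - (i.1 + 1)) = (-1) ^ (i.1 + 1) * a i)
    (J : Ideal (MvPolynomial (Fin n) k))
    (hJ : J = Ideal.span
      (Set.range fun i : Fin n => Polynomial.aeval (MvPolynomial.X i) f)) :
    Ideal.span
        ((fun g => Ideal.Quotient.mk J g) ''
          {g | ∃ b : k, f.eval b ≠ 0 ∧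
            g = (∏ i : Fin n, (MvPolynomial.C b - MvPolynomial.X i)) -
              MvPolynomial.C (f.eval b)}) =
      Ideal.span
        ((fun g => Ideal.Quotient.mk J g) ''
          (Set.range fun i : Fin n =>
            MvPolynomial.esymm (Fin n) k (i.1 + 1) - MvPolynomial.C (a i))) :=
  ideal_of_norm_relations_eq_ideal_of_esymm_general a f hf hdeg hcoeff J
end
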